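/- Let (a_n) be a sequence of natural numbers and S = {2^{-a_n} + Z : n ∈ N} ⊆ T. If a sequence of integers (l_j) converges to 0 in the topology τ_S of uniform convergence on S, then (l_j) converges to 0 in the 2-adic topology on Z; that is, for each n there exists j_n such that 2^{a_n} divides l_j for all j ≥ j_n. -/

import Mathlib

/-! An integer `z` with `z / d + ℤ ∈ T_m` is within `d / (4m)` of a multiple of `d`; once
`d < 4m` that distance is below `1`, so `z` is itself a multiple of `d`. Applied with
`d = m = 2^{a_n}`, convergence in `τ_S` forces `2^{a_n} ∣ l_j` eventually. -/

/-- `T_m = [-1/(4m), 1/(4m)] + ℤ` inside the circle `𝕋 = ℝ/ℤ`. -/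
def Tm (m : ℕ) : Set (AddCircle (1 : ℝ)) :=
  {z | ∃ r : ℝ, |r| ≤ 1 / (4 * m) ∧ (r : AddCircle (1 : ℝ)) = z}

theorem exists_int_abs_sub_le_of_mem_Tm {m : ℕ} {x : ℝ} (hx : (x : AddCircle (1 : ℝ)) ∈ Tm m) :
    ∃ k : ℤ, |x - k| ≤ 1 / (4 * m) := by
  obtain ⟨r, hr, hrx⟩ := hx
  obtain ⟨k, hk⟩ := AddSubgroup.mem_zmultiples_iff.mp (QuotientAddGroup.eq_iff_sub_mem.mp hrx)
  refine ⟨-k, ?_⟩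
  have hxr : x - ((-k : ℤ) : ℝ) = r := by
    simp only [zsmul_eq_mul, mul_one] at hk
    push_cast
    linarith
  rwa [hxr]

theorem Int.dvd_of_coe_div_mem_Tm {d m : ℕ} (hd : 0 < d) (hdm : d < 4 * m) {z : ℤ}
    (hz : (((z : ℝ) / d : ℝ) : AddCircle (1 : ℝ)) ∈ Tm m) : (d : ℤ) ∣ z := by
  obtain ⟨k, hk⟩ := exists_int_abs_sub_le_of_mem_Tm hz
  have hd' : (0 : ℝ) < d := by exact_mod_cast hd
  have hm' : (0 : ℝ) < 4 * m := by exact_mod_cast (by omega : 0 < 4 * m)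
  have hdist : |((z - d * k : ℤ) : ℝ)| < 1 :=
    calc |((z - d * k : ℤ) : ℝ)| = d * |(z : ℝ) / d - k| := by
          rw [← abs_of_pos hd', ← abs_mul, abs_of_pos hd']
          push_cast
          field_simp
      _ ≤ d * (1 / (4 * m)) := by gcongr
      _ < 1 := by
          rw [mul_one_div, div_lt_one hm']
          exact_mod_cast hdm
  have hzero : z - d * k = 0 := Int.abs_lt_one_iff.mp (by exact_mod_cast hdist)
  exact ⟨k, by linarith⟩

/-- If a sequence of integers `(l_j)` converges to `0` in the topology `τ_S` of uniform
convergence on `S = {2^{-a_n} + ℤ}` (i.e. for every `m ≥ 1` eventually `l_j ∈ V_{S,m}`),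
then it converges to `0` in the 2-adic topology: for each `n` eventually `2^{a_n} ∣ l_j`. -/
theorem tauS_conv_implies_two_adic_conv (a : ℕ → ℕ) (l : ℕ → ℤ)
    (hS : ∀ m : ℕ, 0 < m → ∃ J : ℕ, ∀ j ≥ J, ∀ n : ℕ,
      (((l j : ℝ) / 2 ^ a n : ℝ) : AddCircle (1 : ℝ)) ∈ Tm m) :
    ∀ n : ℕ, ∃ J : ℕ, ∀ j ≥ J, (2 ^ a n : ℤ) ∣ l j := by
  intro n
  have hpos : 0 < 2 ^ a n := by positivity
  obtain ⟨J, hJ⟩ := hS (2 ^ a n) hpos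
  refine ⟨J, fun j hj => ?_⟩
  have hmem := hJ j hj n
  rw [show ((2 : ℝ) ^ a n) = ((2 ^ a n : ℕ) : ℝ) by push_cast; rfl] at hmem
  exact_mod_cast Int.dvd_of_coe_div_mem_Tm hpos (by omega) hmem
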